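/- arXiv:1101.5280 — 2 statements merged into one kernel-verified Lean document; each statement's English description precedes it below -/
import Mathlib

section
/- Let γ_1, …, γ_m ∈ ℝ^n and k_r⁺, k_r⁻ > 0 for r = 1,…,m, and suppose there is a fixed-point-free involution σ of {1,…,m} with γ_{σ(r)} = −γ_r, k_{σ(r)}⁺ = k_r⁻ and k_{σ(r)}⁻ = k_r⁺. Then there exists x ∈ ℝ^n with ∑_{i=1}^n γ_{r i} x_i = ln k_r⁺ − ln k_r⁻ for all r if and only if for every λ ∈ ℝ^m with λ_r ≥ 0 for all r and ∑_r λ_r γ_r = 0 the Wegscheider identity ∏_{r=1}^m (k_r⁺)^{λ_r} = ∏_{r=1}^m (k_r⁻)^{λ_r} holds. -/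
/-!
Taking logarithms, the Wegscheider identity for `λ` says `λ ⬝ᵥ b = 0` with
`b r = ln k_r⁺ - ln k_r⁻`, so by the Fredholm alternative the linear system `γ x = b` is solvable
iff the identity holds for every `λ` with `λ ᵥ* γ = 0`, of any sign. The sign condition costs
nothing: the rows of `γ` and the entries of `b` are antisymmetric under the fixed-point-free
involution `σ`, hence sum to zero, so adding a large constant to `λ` makes it nonnegative without
changing `λ ᵥ* γ` or `λ ⬝ᵥ b`.
-/

open Finset Matrix

theorem Matrix.exists_mulVec_eq_iff_forall_vecMul_eq_zero {K m n : Type*} [Field K] [Fintype m]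
    [Fintype n] {A : Matrix m n K} {b : m → K} :
    (∃ x, A *ᵥ x = b) ↔ ∀ y, y ᵥ* A = 0 → y ⬝ᵥ b = 0 := by
  classical
  constructor
  · rintro ⟨x, rfl⟩ y hy
    rw [dotProduct_mulVec, hy, zero_dotProduct]
  · intro h
    by_contra hb
    obtain ⟨f, hfb, hf⟩ := Submodule.exists_le_ker_of_notMem
      (p := LinearMap.range A.mulVecLin) (v := b) (by simpa using hb)
    set y := (dotProductEquiv K m).symm f
    have hfy : ∀ v, f v = y ⬝ᵥ v := fun v => by
      rw [← dotProductEquiv_apply_apply, LinearEquiv.apply_symm_apply]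
    refine hfb ((hfy b).trans (h y ?_))
    ext i
    rw [vecMul, ← hfy, Pi.zero_apply]
    exact hf ⟨Pi.single i 1, by ext; simp⟩

theorem Fintype.sum_eq_zero_of_involution {ι M : Type*} [Fintype ι] [AddCommGroup M]
    {σ : ι → ι} (hσ : Function.Involutive σ) (hfix : ∀ i, σ i ≠ i) {f : ι → M}
    (hf : ∀ i, f (σ i) = -f i) : ∑ i, f i = 0 :=
  Finset.sum_ninvolution σ (fun i => by rw [hf, add_neg_cancel]) (fun i _ => hfix i)
    (fun _ => mem_univ _) hσ

theorem Real.prod_rpow_eq_exp_dotProduct_log {ι : Type*} [Fintype ι] {a : ι → ℝ}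
    (ha : ∀ i, 0 < a i) (w : ι → ℝ) : ∏ i, a i ^ w i = Real.exp (w ⬝ᵥ fun i => Real.log (a i)) := by
  rw [dotProduct, Real.exp_sum]
  exact prod_congr rfl fun i _ => by rw [Real.rpow_def_of_pos (ha i), mul_comm]

theorem Real.prod_rpow_eq_prod_rpow_iff {ι : Type*} [Fintype ι] {a b : ι → ℝ}
    (ha : ∀ i, 0 < a i) (hb : ∀ i, 0 < b i) (w : ι → ℝ) :
    ∏ i, a i ^ w i = ∏ i, b i ^ w i ↔ w ⬝ᵥ (fun i => Real.log (a i) - Real.log (b i)) = 0 := by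
  rw [prod_rpow_eq_exp_dotProduct_log ha, prod_rpow_eq_exp_dotProduct_log hb, Real.exp_eq_exp,
    ← sub_eq_zero, ← dotProduct_sub]
  rfl

section Involution

variable {ι : Type*} [Fintype ι] {σ : ι → ι}

theorem dotProduct_add_const_of_antisymm {R : Type*} [CommRing R] (hσ : Function.Involutive σ)
    (hfix : ∀ i, σ i ≠ i) {v : ι → R} (hv : ∀ i, v (σ i) = -v i) (y : ι → R) (c : R) :
    (y + fun _ => c) ⬝ᵥ v = y ⬝ᵥ v := by
  rw [add_dotProduct, add_eq_left]
  simp only [dotProduct]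
  rw [← mul_sum, Fintype.sum_eq_zero_of_involution hσ hfix hv, mul_zero]

theorem forall_nonneg_vecMul_eq_zero_iff {n : Type*} (hσ : Function.Involutive σ)
    (hfix : ∀ i, σ i ≠ i) {A : Matrix ι n ℝ} (hA : ∀ i, A (σ i) = -A i) {b : ι → ℝ}
    (hb : ∀ i, b (σ i) = -b i) :
    (∀ y, (∀ i, 0 ≤ y i) → y ᵥ* A = 0 → y ⬝ᵥ b = 0) ↔ ∀ y, y ᵥ* A = 0 → y ⬝ᵥ b = 0 := by
  refine ⟨fun h y hy => ?_, fun h y _ => h y⟩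
  set c := ∑ i, |y i|
  have hshift_nonneg : ∀ i, 0 ≤ (y + fun _ => c : ι → ℝ) i := fun i => by
    have := single_le_sum (fun j _ => abs_nonneg (y j)) (mem_univ i)
    simp only [Pi.add_apply]
    linarith [neg_abs_le (y i)]
  have hshift_vecMul : (y + fun _ => c) ᵥ* A = y ᵥ* A := funext fun j =>
    dotProduct_add_const_of_antisymm hσ hfix (fun i => congrFun (hA i) j) y c
  rw [← dotProduct_add_const_of_antisymm hσ hfix hb y c]
  exact h _ hshift_nonneg (hshift_vecMul.trans hy)

end Involution

/-- With direct and reverse reactions listed separately (fixed-point-free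
involution `σ`), a positive equilibrium with detailed balance exists iff the
Wegscheider identity holds for every oriented (nonnegative) cycle. -/
theorem detailed_balance_iff_nonneg_wegscheider
    (n m : ℕ) (γ : Fin m → Fin n → ℝ) (kp km : Fin m → ℝ)
    (hkp : ∀ r, 0 < kp r) (hkm : ∀ r, 0 < km r)
    (σ : Fin m → Fin m) (hinv : ∀ r, σ (σ r) = r) (hfpf : ∀ r, σ r ≠ r)
    (hγ : ∀ r, γ (σ r) = -γ r)
    (hpσ : ∀ r, kp (σ r) = km r) (hmσ : ∀ r, km (σ r) = kp r) :
    (∃ x : Fin n → ℝ,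
        ∀ r, ∑ i, γ r i * x i = Real.log (kp r) - Real.log (km r)) ↔
      (∀ lam : Fin m → ℝ, (∀ r, 0 ≤ lam r) → (∀ i, ∑ r, lam r * γ r i = 0) →
        ∏ r, kp r ^ lam r = ∏ r, km r ^ lam r) := by
  set b : Fin m → ℝ := fun r => Real.log (kp r) - Real.log (km r)
  have hb : ∀ r, b (σ r) = -b r := fun r => by simp only [b, hpσ, hmσ, neg_sub]
  simp only [Real.prod_rpow_eq_prod_rpow_iff hkp hkm]
  calc (∃ x : Fin n → ℝ, ∀ r, ∑ i, γ r i * x i = b r) ↔ ∃ x, γ *ᵥ x = b := by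
        simp only [funext_iff]; rfl
    _ ↔ ∀ y, y ᵥ* γ = 0 → y ⬝ᵥ b = 0 := exists_mulVec_eq_iff_forall_vecMul_eq_zero
    _ ↔ ∀ y, (∀ r, 0 ≤ y r) → y ᵥ* γ = 0 → y ⬝ᵥ b = 0 :=
      (forall_nonneg_vecMul_eq_zero_iff hinv hfpf hγ hb).symm
    _ ↔ ∀ y, (∀ r, 0 ≤ y r) → (∀ i, ∑ r, y r * γ r i = 0) → y ⬝ᵥ b = 0 := by
        simp only [funext_iff]; rfl
end

section
/- Let γ_1, …, γ_r, ν_1, …, ν_s ∈ ℝ^n. Suppose: (i) there exists b ∈ ℝ^n with b_i > 0 for all i, ⟨γ_i, b⟩ = 0 for all i = 1,…,r and ⟨ν_j, b⟩ = 0 for all j = 1,…,s (a positive linear conservation law); and (ii) the convex hull of {ν_1,…,ν_s} has empty intersection with the linear span of {γ_1,…,γ_r}. Then there exists δ ∈ ℝ^n with δ_i ≥ 0 for all i, ⟨γ_i, δ⟩ = 0 for all i = 1,…,r, and ⟨ν_j, δ⟩ < 0 for all j = 1,…,s. -/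
/-!
Separate the compact convex set `convexHull ℝ (Set.range ν)` strictly from the closed subspace
`span ℝ (Set.range γ)` by a linear functional `⟪·, δ₀⟫`. Being bounded on a subspace, it vanishes
there, so `⟪γ i, δ₀⟫ = 0` and `⟪ν j, δ₀⟫ < 0`. Adding a large multiple of the positive
conservation law `b` makes `δ₀` nonnegative without changing these inner products.
-/

open Set Matrix

theorem LinearMap.apply_eq_zero_of_forall_mem_lt {E : Type*} [AddCommGroup E] [Module ℝ E]
    {S : Submodule ℝ E} (f : E →ₗ[ℝ] ℝ) {c : ℝ} (h : ∀ x ∈ S, c < f x) {x : E} (hx : x ∈ S) :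
    f x = 0 := by
  by_contra hfx
  have := h ((c / f x) • x) (S.smul_mem _ hx)
  rw [map_smul, smul_eq_mul, div_mul_cancel₀ _ hfx] at this
  exact this.false

theorem Submodule.exists_strongDual_eq_zero_and_neg_of_disjoint {E : Type*} [TopologicalSpace E]
    [AddCommGroup E] [IsTopologicalAddGroup E] [Module ℝ E] [ContinuousSMul ℝ E]
    [LocallyConvexSpace ℝ E] {K : Set E} {S : Submodule ℝ E} (hKconv : Convex ℝ K)
    (hK : IsCompact K) (hS : IsClosed (S : Set E)) (h : Disjoint K S) :
    ∃ f : StrongDual ℝ E, (∀ x ∈ S, f x = 0) ∧ ∀ x ∈ K, f x < 0 := by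
  obtain ⟨f, u, v, hfK, huv, hfS⟩ :=
    geometric_hahn_banach_compact_closed hKconv hK S.convex hS h
  have hS0 : ∀ x ∈ S, f x = 0 := fun x hx =>
    (f : E →ₗ[ℝ] ℝ).apply_eq_zero_of_forall_mem_lt hfS hx
  have hv : v < 0 := by simpa using hfS 0 S.zero_mem
  exact ⟨f, hS0, fun x hx => by linarith [hfK x hx]⟩

theorem exists_dotProduct_eq_zero_and_neg_of_disjoint {ι κ μ : Type*} [Fintype ι] [Finite μ]
    (γ : κ → ι → ℝ) (ν : μ → ι → ℝ)
    (h : Disjoint (convexHull ℝ (range ν)) (Submodule.span ℝ (range γ) : Set (ι → ℝ))) :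
    ∃ δ : ι → ℝ, (∀ i, γ i ⬝ᵥ δ = 0) ∧ ∀ j, ν j ⬝ᵥ δ < 0 := by
  classical
  obtain ⟨f, hf0, hfneg⟩ := Submodule.exists_strongDual_eq_zero_and_neg_of_disjoint
    (convex_convexHull ℝ _) ((finite_range ν).isCompact_convexHull ℝ)
    (Submodule.closed_of_finiteDimensional _) h
  have hrepr : ∀ x, x ⬝ᵥ (dotProductEquiv ℝ ι).symm f = f x := fun x => by
    rw [dotProduct_comm]
    exact LinearMap.congr_fun ((dotProductEquiv ℝ ι).apply_symm_apply (f : (ι → ℝ) →ₗ[ℝ] ℝ)) x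
  refine ⟨(dotProductEquiv ℝ ι).symm f, fun i => ?_, fun j => ?_⟩
  · rw [hrepr]
    exact hf0 _ (Submodule.subset_span ⟨i, rfl⟩)
  · rw [hrepr]
    exact hfneg _ (subset_convexHull ℝ _ ⟨j, rfl⟩)

theorem exists_nonneg_add_smul {ι : Type*} [Finite ι] (x : ι → ℝ) {b : ι → ℝ}
    (hb : ∀ i, 0 < b i) : ∃ c : ℝ, 0 ≤ x + c • b := by
  obtain ⟨c, hc⟩ := Finite.exists_le fun i => -x i / b i
  refine ⟨c, fun i => ?_⟩
  have := (div_le_iff₀ (hb i)).1 (hc i)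
  simp only [Pi.zero_apply, Pi.add_apply, Pi.smul_apply, smul_eq_mul]
  linarith

/-- Existence of nonnegative exponents `δ` for the multiscale degeneration
of equilibria: under a positive conservation law and the structural condition
(convex hull of irreversible stoichiometric vectors misses the span of the
reversible ones) there is `δ ≥ 0` with `⟨γ_i, δ⟩ = 0` and `⟨ν_j, δ⟩ < 0`. -/
theorem exists_nonneg_exponents
    (n r s : ℕ) (γ : Fin r → Fin n → ℝ) (ν : Fin s → Fin n → ℝ)
    (hcons : ∃ b : Fin n → ℝ, (∀ i, 0 < b i) ∧
      (∀ i, ∑ t, γ i t * b t = 0) ∧ (∀ j, ∑ t, ν j t * b t = 0))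
    (hstruct : convexHull ℝ (Set.range ν) ∩
      (Submodule.span ℝ (Set.range γ) : Set (Fin n → ℝ)) = ∅) :
    ∃ δ : Fin n → ℝ, (∀ i, 0 ≤ δ i) ∧
      (∀ i, ∑ t, γ i t * δ t = 0) ∧ (∀ j, ∑ t, ν j t * δ t < 0) := by
  obtain ⟨b, hb, hγb, hνb⟩ := hcons
  change ∀ i, γ i ⬝ᵥ b = 0 at hγb
  change ∀ j, ν j ⬝ᵥ b = 0 at hνb
  obtain ⟨δ₀, hγδ₀, hνδ₀⟩ :=
    exists_dotProduct_eq_zero_and_neg_of_disjoint γ ν (disjoint_iff_inter_eq_empty.mpr hstruct)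
  obtain ⟨c, hc⟩ := exists_nonneg_add_smul δ₀ hb
  refine ⟨δ₀ + c • b, hc, fun i => ?_, fun j => ?_⟩
  · change γ i ⬝ᵥ (δ₀ + c • b) = 0
    rw [dotProduct_add, dotProduct_smul, hγδ₀ i, smul_eq_mul, hγb i, mul_zero, add_zero]
  · change ν j ⬝ᵥ (δ₀ + c • b) < 0
    rw [dotProduct_add, dotProduct_smul, smul_eq_mul, hνb j, mul_zero, add_zero]
    exact hνδ₀ j
end
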